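/- For any prime q and natural number a ≥ 1, there exists a natural number n ≥ 1 such that S_n(q^a) is not congruent to S_n(q^(a+1)) modulo q^a. In particular, this holds for n = q - 1 when q is odd, and n = 1 when q = 2. -/

import Mathlib

def S (n m : ℕ) : ℕ := ∑ i ∈ Finset.Icc 1 m, i ^ n

/-!
Since `(k m + i)^n ≡ i^n [MOD m]`, the power sum up to `r m` is `r` times the one up to `m`
modulo `m`. With `m = q^a` and `r = q`, and `q - 1` a unit modulo `q^a`, the two sums in question
agree modulo `q^a` exactly when `q^a ∣ S n (q^a)`.

For `q = 2` this fails because `2 S 1 (2^a) = 2^a (2^a + 1)`. For odd `q`, expanding `(k q^a + i)^n`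
to first order in `q^a` and using `q ∣ ∑_{k<q} k` gives `S n (q^(a+1)) ≡ q S n (q^a)` modulo
`q^(a+1)`. Starting from Fermat's `S (q-1) q ≡ q - 1 [MOD q]`, this gives
`S (q-1) (q^(a+1)) ≡ q^a (q-1) [MOD q^(a+1)]`, which is not divisible by `q^(a+1)`.
-/

open Finset

lemma S_succ (n m : ℕ) : S n (m + 1) = S n m + (m + 1) ^ n :=
  sum_Icc_succ_top (Nat.le_add_left 1 m) _

lemma S_add (n k m : ℕ) : S n (k + m) = S n k + ∑ i ∈ Icc 1 m, (k + i) ^ n := by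
  induction m with
  | zero => simp
  | succ m ih =>
    rw [← add_assoc, S_succ, ih, sum_Icc_succ_top (Nat.le_add_left 1 m), add_assoc, add_assoc]

lemma two_mul_S_one (m : ℕ) : 2 * S 1 m = m * (m + 1) := by
  induction m with
  | zero => simp [S]
  | succ m ih => rw [S_succ, mul_add, ih]; ring

section CommRing

variable {R : Type*} [CommRing R]

lemma add_pow_of_sq_eq_zero {c : R} (hc : c ^ 2 = 0) (x : R) (n : ℕ) :
    (x + c) ^ n = x ^ n + n * c * x ^ (n - 1) := by
  obtain ⟨d, hd⟩ := sq_dvd_add_pow_sub_sub c x n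
  rw [hc, zero_mul, sub_sub, sub_eq_zero] at hd
  rw [hd]; ring

lemma cast_sum_Icc_add_pow {c : ℕ} (hc : (c : R) ^ 2 = 0) (n m : ℕ) :
    ((∑ i ∈ Icc 1 m, (c + i) ^ n : ℕ) : R) = S n m + n * c * S (n - 1) m := by
  simp only [S, Nat.cast_sum, Nat.cast_pow, Nat.cast_add, add_comm (c : R),
    add_pow_of_sq_eq_zero hc, sum_add_distrib, mul_sum]

lemma cast_S_mul {m : ℕ} (hm : (m : R) ^ 2 = 0) (n r : ℕ) :
    (S n (r * m) : R) = r * S n m + n * m * (∑ k ∈ range r, (k : R)) * S (n - 1) m := by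
  induction r with
  | zero => simp [S]
  | succ r ih =>
    have hrm : ((r * m : ℕ) : R) ^ 2 = 0 := by push_cast; rw [mul_pow, hm, mul_zero]
    rw [add_mul, one_mul, S_add, Nat.cast_add, ih, cast_sum_Icc_add_pow hrm, sum_range_succ]
    push_cast
    ring

end CommRing

lemma S_mul_modEq (n r m : ℕ) : S n (r * m) ≡ r * S n m [MOD m] := by
  rw [← ZMod.natCast_eq_natCast_iff, cast_S_mul (by simp) n r]
  simp

lemma S_modEq_S_mul_iff {r m : ℕ} (hr : m.Coprime (r - 1)) (n : ℕ) :
    S n m ≡ S n (r * m) [MOD m] ↔ m ∣ S n m := by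
  rcases r with _ | k
  · rw [(Nat.coprime_zero_right m).mp hr]
    exact iff_of_true Nat.modEq_one (one_dvd _)
  · rw [Nat.add_sub_cancel] at hr
    have hmul : S n ((k + 1) * m) ≡ S n m + k * S n m [MOD m] := by
      simpa only [add_one_mul, add_comm (k * S n m)] using S_mul_modEq n (k + 1) m
    rw [← hr.dvd_mul_left, ← Nat.modEq_zero_iff_dvd, Nat.ModEq.comm (a := k * _),
      ← (Nat.ModEq.refl (S n m)).add_iff_left (c := 0) (d := k * S n m), add_zero]
    exact ⟨fun h => h.trans hmul, fun h => h.trans hmul.symm⟩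

lemma odd_dvd_sum_range_id {q : ℕ} (hq : Odd q) : q ∣ ∑ k ∈ range q, k := by
  obtain ⟨t, rfl⟩ := hq
  rw [sum_range_id, Nat.add_sub_cancel, Nat.mul_div_assoc _ (dvd_mul_right 2 t)]
  exact dvd_mul_right _ _

lemma S_pow_succ_modEq {q : ℕ} (hq : Odd q) {a : ℕ} (ha : 1 ≤ a) (n : ℕ) :
    S n (q ^ (a + 1)) ≡ q * S n (q ^ a) [MOD q ^ (a + 1)] := by
  have hsq : ((q ^ a : ℕ) : ZMod (q ^ (a + 1))) ^ 2 = 0 := by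
    rw [← Nat.cast_pow, ZMod.natCast_eq_zero_iff, ← pow_mul]
    exact pow_dvd_pow q (by omega)
  have hgauss :
      ((q ^ a : ℕ) : ZMod (q ^ (a + 1))) * ∑ k ∈ range q, (k : ZMod (q ^ (a + 1))) = 0 := by
    rw [← Nat.cast_sum, ← Nat.cast_mul, ZMod.natCast_eq_zero_iff, pow_succ]
    exact mul_dvd_mul_left _ (odd_dvd_sum_range_id hq)
  have hS := cast_S_mul hsq n q
  rw [← pow_succ', mul_assoc (n : ZMod (q ^ (a + 1))), hgauss] at hS
  rw [← ZMod.natCast_eq_natCast_iff, hS]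
  push_cast
  ring

lemma S_prime_modEq {q : ℕ} (hq : q.Prime) : S (q - 1) q ≡ q - 1 [MOD q] := by
  have := Fact.mk hq
  have hunit : ∀ i ∈ Icc 1 (q - 1), (i : ZMod q) ^ (q - 1) = 1 := fun i hi => by
    rw [mem_Icc] at hi
    refine ZMod.pow_card_sub_one_eq_one fun h => ?_
    rw [ZMod.natCast_eq_zero_iff] at h
    exact Nat.not_dvd_of_pos_of_lt (by omega) (by omega) h
  conv_lhs => rw [← Nat.sub_add_cancel hq.one_le]
  rw [← ZMod.natCast_eq_natCast_iff, S_succ, Nat.sub_add_cancel hq.one_le, Nat.cast_add,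
    Nat.cast_pow, ZMod.natCast_self, zero_pow (Nat.sub_ne_zero_of_lt hq.one_lt), add_zero, S,
    Nat.cast_sum]
  push_cast
  rw [sum_congr rfl hunit, sum_const, Nat.card_Icc, Nat.add_sub_cancel, nsmul_one]

lemma S_prime_pow_modEq {q : ℕ} (hq : q.Prime) (hq2 : q ≠ 2) (a : ℕ) :
    S (q - 1) (q ^ (a + 1)) ≡ q ^ a * (q - 1) [MOD q ^ (a + 1)] := by
  induction a with
  | zero => simpa using S_prime_modEq hq
  | succ a ih =>
    have hstep := S_pow_succ_modEq (hq.odd_of_ne_two hq2) (Nat.le_add_left 1 a) (q - 1)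
    have hmul := ih.mul_left' q
    rw [← pow_succ', ← mul_assoc, ← pow_succ'] at hmul
    exact hstep.trans hmul

lemma prime_pow_succ_not_dvd_S_sub_one {q : ℕ} (hq : q.Prime) (hq2 : q ≠ 2) (a : ℕ) :
    ¬ q ^ (a + 1) ∣ S (q - 1) (q ^ (a + 1)) := by
  rw [(S_prime_pow_modEq hq hq2 a).dvd_iff dvd_rfl, pow_succ,
    Nat.mul_dvd_mul_iff_left (pow_pos hq.pos a)]
  exact Nat.not_dvd_of_pos_of_lt (Nat.sub_pos_of_lt hq.one_lt) (Nat.sub_lt hq.pos one_pos)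

lemma two_pow_not_dvd_S_one {a : ℕ} (ha : a ≠ 0) : ¬ 2 ^ a ∣ S 1 (2 ^ a) := by
  intro h
  have h2 : 2 ^ a * 2 ∣ 2 ^ a * (2 ^ a + 1) := by
    rw [← two_mul_S_one, mul_comm]
    exact mul_dvd_mul_left 2 h
  rw [Nat.mul_dvd_mul_iff_left (by positivity), Nat.dvd_add_right (dvd_pow_self 2 ha)] at h2
  exact absurd h2 (by decide)

theorem stmt8 (q a : ℕ) (hq : q.Prime) (ha : 1 ≤ a) :
    (∃ n, 1 ≤ n ∧ ¬ S n (q ^ a) ≡ S n (q ^ (a + 1)) [MOD q ^ a]) ∧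
    ¬ S (if q = 2 then 1 else q - 1) (q ^ a) ≡
      S (if q = 2 then 1 else q - 1) (q ^ (a + 1)) [MOD q ^ a] := by
  have hkey : ¬ q ^ a ∣ S (if q = 2 then 1 else q - 1) (q ^ a) := by
    split_ifs with hq2
    · subst hq2
      exact two_pow_not_dvd_S_one (by omega)
    · obtain ⟨b, rfl⟩ : ∃ b, a = b + 1 := ⟨a - 1, by omega⟩
      exact prime_pow_succ_not_dvd_S_sub_one hq hq2 b
  have hpos : 1 ≤ if q = 2 then 1 else q - 1 := by
    split_ifs
    · rfl
    · exact Nat.le_sub_one_of_lt hq.one_lt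
  have hcop : (q ^ a).Coprime (q - 1) :=
    ((Nat.coprime_self_sub_right hq.one_le).mpr (Nat.coprime_one_right q)).pow_left a
  have hmain := mt (S_modEq_S_mul_iff hcop _).mp hkey
  rw [← pow_succ'] at hmain
  exact ⟨⟨_, hpos, hmain⟩, hmain⟩
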